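/- arXiv:2205.08995 — 3 statements merged into one kernel-verified Lean document; each statement's English description precedes it below -/
import Mathlib

section
/- For an odd prime power q and a non-square η in F_{q^2}, the binary operation (x,y)∘(u,v) = (xu + η(yv)^σ, xv + yu) on F_{q^2} × F_{q^2}, where σ is a field automorphism of F_{q^2} fixing F_q, has no zero divisors: if (x,y)∘(u,v) = (0,0) then (x,y) = (0,0) or (u,v) = (0,0). -/
/-- Dickson semifield multiplication on `F × F`. -/
def dicksonMul {F : Type*} [Field F] (σ : F ≃+* F) (η : F) (a b : F × F) : F × F :=
  (a.1 * b.1 + η * σ (a.2 * b.2), a.1 * b.2 + a.2 * b.1)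

/-- The Dickson multiplication on `F_{q^2} × F_{q^2}` (q odd, η a non-square,
σ ∈ Gal(F_{q^2}/F_q)) has no zero divisors. -/
theorem dickson_no_zero_divisors
    (q : ℕ) (hq : ∃ p n : ℕ, p.Prime ∧ Odd p ∧ 0 < n ∧ q = p ^ n)
    (F : Type*) [Field F] [Fintype F] (hF : Fintype.card F = q ^ 2)
    (σ : F ≃+* F) (hσ : (∀ x : F, σ x = x) ∨ (∀ x : F, σ x = x ^ q))
    (η : F) (hη : ¬ ∃ x : F, x ^ 2 = η) :
    ∀ x y u v : F, dicksonMul σ η (x, y) (u, v) = (0, 0) →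
      (x = 0 ∧ y = 0) ∨ (u = 0 ∧ v = 0) := by
  have hqodd : Odd q := by
    obtain ⟨p, n, hp, hpodd, hn, rfl⟩ := hq
    exact hpodd.pow
  obtain ⟨m, hm⟩ := hqodd
  intro x y u v h
  simp only [dicksonMul, Prod.mk.injEq] at h
  obtain ⟨h1, h2⟩ := h
  by_cases hy : y = 0
  · by_cases hx : x = 0
    · exact Or.inl ⟨hx, hy⟩
    · right
      subst hy
      have h1' : x * u = 0 := by simpa using h1
      have h2' : x * v = 0 := by simpa using h2
      exact ⟨(mul_eq_zero.mp h1').resolve_left hx,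
             (mul_eq_zero.mp h2').resolve_left hx⟩
  · by_cases hv : v = 0
    · right
      subst hv
      have h2' : y * u = 0 := by simpa using h2
      exact ⟨(mul_eq_zero.mp h2').resolve_left hy, rfl⟩
    · exfalso
      apply hη
      rcases hσ with hs | hs
      · -- σ = id
        rw [hs] at h1
        have key : η * v ^ 2 * y = u ^ 2 * y := by linear_combination v * h1 - u * h2
        have key2 : η * v ^ 2 = u ^ 2 := mul_right_cancel₀ hy key
        refine ⟨u / v, ?_⟩
        field_simp
        linear_combination -key2
      · -- σ = Frobenius
        rw [hs] at h1
        have key : η * (y ^ q * v ^ q) * v = y * u ^ 2 := by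
          rw [← mul_pow]
          linear_combination v * h1 - u * h2
        rw [hm] at key
        have key2 : η * (y ^ m * v ^ (m + 1)) ^ 2 * y = u ^ 2 * y := by
          linear_combination key
        have key3 : η * (y ^ m * v ^ (m + 1)) ^ 2 = u ^ 2 :=
          mul_right_cancel₀ hy key2
        refine ⟨u / (y ^ m * v ^ (m + 1)), ?_⟩
        have hne : y ^ m * v ^ (m + 1) ≠ 0 :=
          mul_ne_zero (pow_ne_zero _ hy) (pow_ne_zero _ hv)
        field_simp
        linear_combination -key3
end

section
/- For an odd prime power q, a non-square η ∈ F_{q^2}, and a nontrivial σ ∈ Gal(F_{q^2}/F_q), the Dickson multiplication (x,y)∘(u,v) = (xu + η(yv)^σ, xv + yu) on F_{q^2} × F_{q^2} is not associative. -/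
/-- The Dickson multiplication on `F_{q^2} × F_{q^2}` (q odd, η a non-square,
σ the nontrivial element of Gal(F_{q^2}/F_q)) is not associative. -/
theorem dickson_not_assoc
    (q : ℕ) (hq : ∃ p n : ℕ, p.Prime ∧ Odd p ∧ 0 < n ∧ q = p ^ n)
    (F : Type*) [Field F] [Fintype F] (hF : Fintype.card F = q ^ 2)
    (σ : F ≃+* F) (hσ : ∀ x : F, σ x = x ^ q) (hσne : ∃ x : F, σ x ≠ x)
    (η : F) (hη : ¬ ∃ x : F, x ^ 2 = η) :
    ¬ ∀ a b c : F × F,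
        dicksonMul σ η (dicksonMul σ η a b) c = dicksonMul σ η a (dicksonMul σ η b c) := by
  intro h
  obtain ⟨x, hx⟩ := hσne
  have hη0 : η ≠ 0 := fun h0 => hη ⟨0, by simp [h0]⟩
  have h1 := h (0, 1) (0, 1) (0, x)
  simp only [dicksonMul, Prod.mk.injEq] at h1
  apply hx
  have h2 := h1.2
  simp only [mul_one, one_mul, mul_zero, zero_mul, add_zero, zero_add, map_one] at h2
  exact mul_left_cancel₀ hη0 h2.symm
end

section
/- Let V be an F_q-subspace of M_n(F_q) in which every nonzero matrix is invertible. Then dim V ≤ n. -/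
/-!
Fix a nonzero vector `v`. Evaluation `M ↦ M *ᵥ v` is linear on `V`, and it is injective
because a nonzero `M ∈ V` is invertible and so cannot kill `v`. Hence `V` embeds into `Kⁿ`.
-/

open Module

namespace Matrix

variable {m K : Type*} [Fintype m] [DecidableEq m] [Field K]

theorem injective_mulVec_of_forall_isUnit (V : Submodule K (Matrix m m K))
    (hV : ∀ M ∈ V, M ≠ 0 → IsUnit M) {v : m → K} (hv : v ≠ 0) :
    Function.Injective (LinearMap.applyₗ v ∘ₗ (toLin' : Matrix m m K ≃ₗ[K] _).toLinearMap
      ∘ₗ V.subtype) := by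
  rw [← LinearMap.ker_eq_bot, LinearMap.ker_eq_bot']
  intro M hMv
  by_contra hM
  have hunit : IsUnit (M : Matrix m m K) := hV M M.2 (by simpa using hM)
  refine hv (mulVec_injective_iff_isUnit.mpr hunit ?_)
  simpa using hMv

theorem finrank_le_card_of_forall_isUnit (V : Submodule K (Matrix m m K))
    (hV : ∀ M ∈ V, M ≠ 0 → IsUnit M) : finrank K V ≤ Fintype.card m := by
  cases isEmpty_or_nonempty m
  · simp [finrank_zero_of_subsingleton]
  · have hv : (fun _ => 1 : m → K) ≠ 0 := Function.ne_iff.mpr ⟨Classical.arbitrary m, one_ne_zero⟩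
    simpa using LinearMap.finrank_le_finrank_of_injective
      (injective_mulVec_of_forall_isUnit V hV hv)

end Matrix

theorem spreadSet_dim_le_general
    (n : ℕ) (F : Type*) [Field F]
    (V : Submodule F (Matrix (Fin n) (Fin n) F))
    (hinv : ∀ M ∈ V, M ≠ 0 → IsUnit M) :
    Module.finrank F V ≤ n := by
  simpa using Matrix.finrank_le_card_of_forall_isUnit V hinv

/-- A subspace of n×n matrices over a finite field in which every nonzero element is
invertible has dimension at most n. -/
theorem spreadSet_dim_le
    (n : ℕ) (F : Type*) [Field F] [Fintype F]
    (V : Submodule F (Matrix (Fin n) (Fin n) F))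
    (hinv : ∀ M ∈ V, M ≠ 0 → IsUnit M) :
    Module.finrank F V ≤ n :=
  spreadSet_dim_le_general n F V hinv
end
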